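/- For λ = −it with t > 0, the quantity Im ∫_{−1}^{1} √(i(ζ + it)) dζ is a strictly monotone continuous function of t that tends to infinity as t → ∞. -/

import Mathlib

/-!
Put `z = 1 + it` with `t > 0`. Then `-1 + it = -z̄`, and for real `c` the principal power obeys
`(-z̄)^c = e^{iπc} · conj (z^c)`. With `e^{iπ/4} = (1 + i)/√2` this turns the function into
`(2√2/3) (Re u + Im u)` for `u = z^{3/2}`, and its derivative into `√2 (Re √z - Im √z)`, which is
positive because `(Re √z)² - (Im √z)² = Re z = 1`. Writing `u = z √z` gives the lower bound `(2/3) √t`.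
-/

open Complex Real Filter
open scoped ComplexConjugate

namespace Complex

theorem log_neg_conj {z : ℂ} (hz : 0 < z.im) : log (-conj z) = conj (log z) + π * I := by
  have harg : arg (-conj z) = π - arg z := by
    rw [arg_neg_eq_arg_add_pi_of_im_neg (by simpa using hz), arg_conj,
      if_neg (arg_lt_pi_iff.mpr (Or.inr hz.ne')).ne]
    ring
  apply Complex.ext <;> simp [log_re, log_im, harg]; ring

theorem neg_conj_cpow_ofReal {z : ℂ} (hz : 0 < z.im) (c : ℝ) :
    (-conj z) ^ (c : ℂ) = exp (π * c * I) * conj (z ^ (c : ℂ)) := by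
  have hz0 : z ≠ 0 := fun h => by simp [h] at hz
  rw [cpow_def_of_ne_zero (by simpa using hz0), cpow_def_of_ne_zero hz0, log_neg_conj hz,
    ← exp_conj, ← exp_add, map_mul, conj_ofReal]
  ring_nf

theorem cpow_inv_two_im_lt_re {z : ℂ} (hre : 0 < z.re) (him : 0 ≤ z.im) :
    (z ^ (2⁻¹ : ℂ)).im < (z ^ (2⁻¹ : ℂ)).re := by
  rw [cpow_inv_two_im_eq_sqrt him, cpow_inv_two_re]
  exact Real.sqrt_lt_sqrt (by linarith [re_le_norm z]) (by linarith)

theorem exp_pi_div_four_mul_I : exp (π / 4 * I) = √2 / 2 * (1 + I) := by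
  rw [show (π / 4 * I : ℂ) = ((π / 4 : ℝ) : ℂ) * I by push_cast; ring, exp_mul_I,
    ← ofReal_cos, ← ofReal_sin, cos_pi_div_four, sin_pi_div_four]
  push_cast
  ring

theorem neg_conj_one_add_I_mul (t : ℝ) : -conj (1 + I * t) = -1 + I * t := by
  apply Complex.ext <;> simp

theorem hasDerivAt_cpow_add_I_mul {z₀ c : ℂ} {t : ℝ} (h : z₀ + I * t ∈ slitPlane) :
    HasDerivAt (fun s : ℝ => (z₀ + I * s) ^ c) (I * (c * (z₀ + I * t) ^ (c - 1))) t := by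
  have hline : HasDerivAt (fun s : ℝ => z₀ + I * s) I t := by
    simpa using ((hasDerivAt_id t).ofReal_comp.const_mul I).const_add z₀
  simpa [Function.comp_def, mul_comm] using
    (hasStrictDerivAt_cpow_const (c := c) h).hasDerivAt.scomp t hline

end Complex

noncomputable def imSqrtIntegral (t : ℝ) : ℝ :=
  ((2/3 : ℂ) * exp (π / 4 * I) *
    ((1 + I * t) ^ ((3 : ℂ)/2) - (-1 + I * t) ^ ((3 : ℂ)/2))).im

section imSqrtIntegral

variable {t : ℝ}

theorem hasDerivAt_imSqrtIntegral (ht : 0 < t) :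
    HasDerivAt imSqrtIntegral
      (√2 * (((1 + I * t) ^ (2⁻¹ : ℂ)).re - ((1 + I * t) ^ (2⁻¹ : ℂ)).im)) t := by
  have hp := hasDerivAt_cpow_add_I_mul (z₀ := 1) (c := 3/2) (t := t) (by simp [slitPlane])
  have hm := hasDerivAt_cpow_add_I_mul (z₀ := -1) (c := 3/2) (t := t)
    (by simp [slitPlane, ht.ne'])
  refine (imCLM.hasFDerivAt.comp_hasDerivAt t
    ((hp.sub hm).const_mul ((2/3) * exp (π / 4 * I)))).congr_deriv ?_
  have hw : ((-1 : ℂ) + I * t) ^ (2⁻¹ : ℂ) = I * conj ((1 + I * t) ^ (2⁻¹ : ℂ)) := by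
    have := neg_conj_cpow_ofReal (z := 1 + I * t) (by simpa using ht) 2⁻¹
    rw [neg_conj_one_add_I_mul] at this
    push_cast at this
    rwa [show (π : ℂ) * 2⁻¹ * I = π / 2 * I by ring, exp_pi_div_two_mul_I] at this
  rw [show (3 / 2 - 1 : ℂ) = 2⁻¹ by norm_num, hw, exp_pi_div_four_mul_I]
  simp [mul_re, mul_im]
  ring

theorem imSqrtIntegral_eq_re_add_im (ht : 0 < t) :
    imSqrtIntegral t =
      2 * √2 / 3 * (((1 + I * t) ^ ((3 : ℂ)/2)).re + ((1 + I * t) ^ ((3 : ℂ)/2)).im) := by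
  have hu : ((-1 : ℂ) + I * t) ^ ((3 : ℂ)/2) = -I * conj ((1 + I * t) ^ ((3 : ℂ)/2)) := by
    have := neg_conj_cpow_ofReal (z := 1 + I * t) (by simpa using ht) (3/2)
    rw [neg_conj_one_add_I_mul] at this
    push_cast at this
    rwa [show (π : ℂ) * (3/2) * I = -π / 2 * I + 2 * π * I by ring, Complex.exp_add,
      exp_two_pi_mul_I, exp_neg_pi_div_two_mul_I, mul_one] at this
  rw [imSqrtIntegral, hu, exp_pi_div_four_mul_I]
  simp [mul_re, mul_im]
  ring

theorem sqrt_le_sqrt_two_mul_re_add_im_cpow (ht : 0 ≤ t) :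
    √t ≤ √2 * (((1 + I * t) ^ ((3 : ℂ)/2)).re + ((1 + I * t) ^ ((3 : ℂ)/2)).im) := by
  set z : ℂ := 1 + I * t
  have hz : z ≠ 0 := fun h => by simpa [z] using congrArg re h
  have hre : z.re = 1 := by simp [z]
  have him : z.im = t := by simp [z]
  rw [show (3 / 2 : ℂ) = 1 + 2⁻¹ by norm_num, cpow_add _ _ hz, cpow_one]
  set w := z ^ (2⁻¹ : ℂ)
  have hba : w.im < w.re := cpow_inv_two_im_lt_re (by rw [hre]; norm_num) (by rw [him]; exact ht)
  have hb : 0 ≤ w.im := by rw [cpow_inv_two_im_eq_sqrt (by rw [him]; exact ht)]; positivity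
  have ha : √t ≤ √2 * w.re := by
    rw [cpow_inv_two_re, ← Real.sqrt_mul zero_le_two, hre]
    exact Real.sqrt_le_sqrt (by linarith [him ▸ im_le_norm z])
  have : 0 ≤ w.im + t * (w.re - w.im) := by nlinarith
  simp only [mul_re, mul_im, hre, him]
  nlinarith [Real.sqrt_nonneg 2]

theorem two_thirds_mul_sqrt_le_imSqrtIntegral (ht : 0 < t) :
    2 / 3 * √t ≤ imSqrtIntegral t := by
  rw [imSqrtIntegral_eq_re_add_im ht, mul_div_right_comm, mul_assoc]
  gcongr
  exact sqrt_le_sqrt_two_mul_re_add_im_cpow ht.le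

end imSqrtIntegral

/-- For `λ = −it`, `t > 0`, the quantity
`Im ∫_{−1}^{1} √(i(ζ+it)) dζ = Im[(2/3)e^{iπ/4}((1+it)^{3/2} − (−1+it)^{3/2})]`
is a strictly monotone continuous function of `t` tending to infinity as `t → ∞`. -/
theorem stmt13 :
    let f : ℝ → ℝ := fun t =>
      ((2/3 : ℂ) * Complex.exp (Real.pi / 4 * Complex.I) *
        (((1 : ℂ) + Complex.I * t) ^ ((3 : ℂ)/2) -
         ((-1 : ℂ) + Complex.I * t) ^ ((3 : ℂ)/2))).im
    ContinuousOn f (Set.Ioi 0) ∧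
    (StrictMonoOn f (Set.Ioi 0) ∨ StrictAntiOn f (Set.Ioi 0)) ∧
    Tendsto (fun t => |f t|) atTop atTop := by
  show ContinuousOn imSqrtIntegral _ ∧ (StrictMonoOn imSqrtIntegral _ ∨ _) ∧ _
  have hcont : ContinuousOn imSqrtIntegral (Set.Ioi 0) := fun t ht =>
    (hasDerivAt_imSqrtIntegral ht).continuousAt.continuousWithinAt
  refine ⟨hcont, Or.inl ?_, ?_⟩
  · refine strictMonoOn_of_deriv_pos (convex_Ioi 0) hcont fun t ht => ?_
    rw [interior_Ioi] at ht
    rw [(hasDerivAt_imSqrtIntegral ht).deriv]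
    have := cpow_inv_two_im_lt_re (z := 1 + I * t) (by simp) (by simpa using ht.le)
    exact mul_pos (by positivity) (sub_pos.mpr this)
  · refine tendsto_atTop_mono' atTop ?_
      (tendsto_sqrt_atTop.const_mul_atTop (by norm_num : (0 : ℝ) < 2 / 3))
    filter_upwards [eventually_gt_atTop 0] with t ht
    exact (two_thirds_mul_sqrt_le_imSqrtIntegral ht).trans (le_abs_self _)
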